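/- arXiv:1401.1125 — 5 statements merged into one kernel-verified Lean document; each statement's English description precedes it below -/
import Mathlib

section
/- Let U be a finite set and let G be a subgroup of Sym(U). Then G has a unique coarsest supporting partition: there exists a partition SP(G) of U that supports G such that every partition of U supporting G is a refinement of SP(G) (i.e. SP(G) is coarser than every supporting partition), and any partition with this property equals SP(G). -/
/-!
The coarsest supporting partition of `G` is the orbit partition of the subgroup `H ≤ G`
generated by the transpositions in `G`. A permutation preserving every orbit of a group generated
by transpositions lies in that group, so the orbit partition supports `G`. Conversely, if a
partition supports `G`, then `G` contains the transposition of any two points of a common part,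
so every part lies inside an `H`-orbit.
-/

/-- The pointwise stabiliser of a family of subsets `C` of `U` inside `Sym(U)`. -/
def PointwiseStab {U : Type*} (C : Set (Set U)) : Set (Equiv.Perm U) :=
  {σ : Equiv.Perm U | ∀ P ∈ C, ⇑σ '' P = P}

/-- A partition `C` supports a subgroup `G ≤ Sym(U)` if `Stab_U(C) ⊆ G`. -/
def Supports {U : Type*} (C : Set (Set U)) (G : Subgroup (Equiv.Perm U)) : Prop :=
  PointwiseStab C ⊆ (G : Set (Equiv.Perm U))

/-- `C'` is as coarse as `C` if every part of `C` is contained in some part of `C'`. -/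
def CoarserThan {U : Type*} (C' C : Set (Set U)) : Prop :=
  ∀ P ∈ C, ∃ P' ∈ C', P ⊆ P'

open Equiv MulAction

namespace Setoid

variable {U : Type*}

theorem coarserThan_classes_iff {r s : Setoid U} : CoarserThan r.classes s.classes ↔ s ≤ r := by
  constructor
  · intro h x y hxy
    obtain ⟨_, ⟨w, rfl⟩, hsub⟩ := h {z | s z y} ⟨y, rfl⟩
    exact r.trans (hsub hxy) (r.symm (hsub (s.refl y)))
  · rintro h _ ⟨y, rfl⟩
    exact ⟨{z | r z y}, ⟨y, rfl⟩, fun _ hz ↦ h hz⟩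

theorem IsPartition.eq_of_coarserThan_of_coarserThan {A B : Set (Set U)} (hA : IsPartition A)
    (hB : IsPartition B) (hAB : CoarserThan A B) (hBA : CoarserThan B A) : A = B := by
  obtain ⟨r, rfl⟩ : ∃ r : Setoid U, r.classes = A := ⟨_, classes_mkClasses A hA⟩
  obtain ⟨s, rfl⟩ : ∃ s : Setoid U, s.classes = B := ⟨_, classes_mkClasses B hB⟩
  rw [coarserThan_classes_iff] at hAB hBA
  rw [le_antisymm hAB hBA]

theorem mem_pointwiseStab_classes_iff {r : Setoid U} {σ : Perm U} :
    σ ∈ PointwiseStab r.classes ↔ ∀ x, r (σ x) x := by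
  constructor
  · intro h x
    have hσx : σ x ∈ σ '' {z | r z x} := ⟨x, r.refl x, rfl⟩
    rwa [h _ ⟨x, rfl⟩] at hσx
  · rintro h _ ⟨y, rfl⟩
    refine Set.Subset.antisymm ?_ fun z hz ↦ ⟨σ.symm z, ?_, σ.apply_symm_apply z⟩
    · rintro _ ⟨w, hw, rfl⟩
      exact r.trans (h w) hw
    · have hz' := h (σ.symm z)
      rw [σ.apply_symm_apply] at hz'
      exact r.trans (r.symm hz') hz

theorem swap_mem_pointwiseStab_classes [DecidableEq U] {r : Setoid U} {x y : U} (h : r x y) :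
    swap x y ∈ PointwiseStab r.classes := by
  refine mem_pointwiseStab_classes_iff.2 fun z ↦ ?_
  rcases eq_or_ne z x with rfl | hzx
  · simpa using r.symm h
  rcases eq_or_ne z y with rfl | hzy
  · simpa using h
  · rw [swap_apply_of_ne_of_ne hzx hzy]

end Setoid

namespace Subgroup

variable {U : Type*} [DecidableEq U]

def swapClosure (G : Subgroup (Perm U)) : Subgroup (Perm U) :=
  closure {σ | σ.IsSwap ∧ σ ∈ G}

variable {G : Subgroup (Perm U)}

theorem swapClosure_le : G.swapClosure ≤ G :=
  (closure_le G).2 fun _ hσ ↦ hσ.2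

theorem swap_mem_swapClosure {x y : U} (h : swap x y ∈ G) : swap x y ∈ G.swapClosure := by
  rcases eq_or_ne x y with rfl | hxy
  · exact swap_self x ▸ G.swapClosure.one_mem
  · exact subset_closure ⟨⟨x, y, hxy, rfl⟩, h⟩

theorem supports_orbitRel_swapClosure [Finite U] :
    Supports (orbitRel G.swapClosure U).classes G := by
  intro σ hσ
  refine swapClosure_le ((mem_closure_isSwap fun _ hτ ↦ hτ.1).2 ⟨Set.toFinite _, fun x ↦ ?_⟩)
  exact Setoid.mem_pointwiseStab_classes_iff.1 hσ x

theorem le_orbitRel_swapClosure {s : Setoid U} (h : Supports s.classes G) :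
    s ≤ orbitRel G.swapClosure U := fun x y hxy ↦
  ⟨⟨swap x y, swap_mem_swapClosure (h (Setoid.swap_mem_pointwiseStab_classes hxy))⟩,
    swap_apply_right x y⟩

end Subgroup

/-- Every subgroup `G ≤ Sym(U)` of a finite set `U` has a unique coarsest
supporting partition. -/
theorem stmt_1 {U : Type*} [Finite U] (G : Subgroup (Equiv.Perm U)) :
    ∃! SPG : Set (Set U),
      Setoid.IsPartition SPG ∧ Supports SPG G ∧
        ∀ C : Set (Set U), Setoid.IsPartition C → Supports C G → CoarserThan SPG C := by
  classical
  set r := orbitRel G.swapClosure U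
  have coarsest (C : Set (Set U)) (hC : Setoid.IsPartition C) (hCG : Supports C G) :
      CoarserThan r.classes C := by
    obtain ⟨s, rfl⟩ : ∃ s : Setoid U, s.classes = C := ⟨_, Setoid.classes_mkClasses C hC⟩
    exact Setoid.coarserThan_classes_iff.2 (Subgroup.le_orbitRel_swapClosure hCG)
  refine ⟨r.classes, ⟨r.isPartition_classes, Subgroup.supports_orbitRel_swapClosure, coarsest⟩, ?_⟩
  rintro C ⟨hC, hCG, hC_coarsest⟩
  exact hC.eq_of_coarserThan_of_coarserThan r.isPartition_classes
    (hC_coarsest _ r.isPartition_classes Subgroup.supports_orbitRel_swapClosure) (coarsest C hC hCG)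
end

section
/- Let U be a finite set and let G be a subgroup of Sym(U). Then Stab_U(SP(G)) ⊆ G ⊆ SStab_U(SP(G)): the pointwise stabiliser of the coarsest supporting partition of G is contained in G, and G is contained in the setwise stabiliser of that partition (i.e. every σ ∈ G maps each part of SP(G) onto a part of SP(G)). -/
/-- `C` is the coarsest partition supporting `G`. -/
def IsCoarsestSupporting {U : Type*} (C : Set (Set U)) (G : Subgroup (Equiv.Perm U)) : Prop :=
  Setoid.IsPartition C ∧ Supports C G ∧
    ∀ C' : Set (Set U), Setoid.IsPartition C' → Supports C' G → CoarserThan C C'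

/-! For `σ ∈ G`, conjugation by `σ` maps `Stab(σ SP(G))` onto `Stab(SP(G)) ⊆ G`, so the image
partition `σ SP(G)` also supports `G` and hence is finer than `SP(G)`. Applying this to `σ⁻¹` and
transporting by `σ` gives the reverse comparison, and two partitions each coarser than the other
coincide: `σ SP(G) = SP(G)`. -/

open Set

theorem Setoid.IsPartition.image_equiv {α β : Type*} {C : Set (Set α)} (hC : Setoid.IsPartition C)
    (e : α ≃ β) : Setoid.IsPartition (image e '' C) := by
  refine ⟨?_, fun b => ?_⟩
  · rintro ⟨P, hP, hPe⟩
    exact hC.1 (image_eq_empty.mp hPe ▸ hP)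
  · obtain ⟨P, ⟨hP, hbP⟩, huniq⟩ := hC.2 (e.symm b)
    refine ⟨e '' P, ⟨mem_image_of_mem _ hP, e.apply_symm_apply b ▸ mem_image_of_mem e hbP⟩, ?_⟩
    rintro _ ⟨⟨Q, hQ, rfl⟩, hbQ⟩
    rw [e.image_eq_preimage_symm] at hbQ
    rw [huniq Q ⟨hQ, hbQ⟩]

theorem CoarserThan.image {α β : Type*} {C' C : Set (Set α)} (h : CoarserThan C' C) (f : α → β) :
    CoarserThan (image f '' C') (image f '' C) := by
  rintro _ ⟨P, hP, rfl⟩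
  obtain ⟨P', hP', hPP'⟩ := h P hP
  exact ⟨f '' P', mem_image_of_mem _ hP', image_mono hPP'⟩

theorem CoarserThan.subset_of_isPartition {α : Type*} {C D : Set (Set α)}
    (hD : Setoid.IsPartition D) (hCD : CoarserThan C D) (hDC : CoarserThan D C) : D ⊆ C := by
  intro P hP
  obtain ⟨Q, hQ, hPQ⟩ := hCD P hP
  obtain ⟨R, hR, hQR⟩ := hDC Q hQ
  obtain ⟨x, hx⟩ := Setoid.nonempty_of_mem_partition hD hP
  have hPR : P = R := Setoid.eq_of_mem_eqv_class hD.2 hP hx hR (hQR (hPQ hx))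
  have hPQ' : P = Q := hPQ.antisymm (hPR ▸ hQR)
  exact hPQ' ▸ hQ

theorem CoarserThan.eq_of_isPartition {α : Type*} {C D : Set (Set α)}
    (hC : Setoid.IsPartition C) (hD : Setoid.IsPartition D)
    (hCD : CoarserThan C D) (hDC : CoarserThan D C) : C = D :=
  (hDC.subset_of_isPartition hC hCD).antisymm (hCD.subset_of_isPartition hD hDC)

theorem inv_mul_mul_mem_pointwiseStab {U : Type*} {C : Set (Set U)} {σ τ : Equiv.Perm U}
    (hτ : τ ∈ PointwiseStab (image σ '' C)) : σ⁻¹ * τ * σ ∈ PointwiseStab C := by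
  intro P hP
  have hστ : τ '' (σ '' P) = σ '' P := hτ _ (mem_image_of_mem _ hP)
  rw [Equiv.Perm.coe_mul, Equiv.Perm.coe_mul, image_comp, image_comp, hστ, Equiv.Perm.inv_def,
    Equiv.symm_image_image]

theorem Supports.image_perm {U : Type*} {C : Set (Set U)} {G : Subgroup (Equiv.Perm U)}
    (hC : Supports C G) {σ : Equiv.Perm U} (hσ : σ ∈ G) : Supports (image σ '' C) G := by
  intro τ hτ
  have hconj : σ⁻¹ * τ * σ ∈ G := hC (inv_mul_mul_mem_pointwiseStab hτ)
  simpa [mul_assoc] using G.mul_mem (G.mul_mem hσ hconj) (G.inv_mem hσ)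

theorem IsCoarsestSupporting.image_perm_eq {U : Type*} {C : Set (Set U)}
    {G : Subgroup (Equiv.Perm U)} (hC : IsCoarsestSupporting C G) {σ : Equiv.Perm U}
    (hσ : σ ∈ G) : image σ '' C = C := by
  obtain ⟨hpart, hsupp, hcoarsest⟩ := hC
  have coarser : ∀ τ ∈ G, CoarserThan C (image τ '' C) := fun τ hτ =>
    hcoarsest _ (hpart.image_equiv τ) (hsupp.image_perm hτ)
  have hback : CoarserThan (image σ '' C) C := by
    simpa [image_image] using (coarser σ⁻¹ (G.inv_mem hσ)).image σ
  exact (CoarserThan.eq_of_isPartition hpart (hpart.image_equiv σ) (coarser σ hσ) hback).symm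

theorem stmt_4_general {U : Type*} (G : Subgroup (Equiv.Perm U)) (C : Set (Set U))
    (hC : IsCoarsestSupporting C G) :
    (∀ σ : Equiv.Perm U, (∀ P ∈ C, ⇑σ '' P = P) → σ ∈ G) ∧
      (∀ σ ∈ G, ∀ P ∈ C, ⇑σ '' P ∈ C) :=
  ⟨fun _ hσ => hC.2.1 hσ, fun σ hσ P hP => hC.image_perm_eq hσ ▸ mem_image_of_mem _ hP⟩

/-- For a finite set `U` and `G ≤ Sym(U)` with coarsest supporting partition
`C = SP(G)`: the pointwise stabiliser of `C` is contained in `G`, and `G` is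
contained in the setwise stabiliser of `C` (every `σ ∈ G` maps each part of `C`
onto a part of `C`). -/
theorem stmt_4 {U : Type*} [Finite U] (G : Subgroup (Equiv.Perm U)) (C : Set (Set U))
    (hC : IsCoarsestSupporting C G) :
    (∀ σ : Equiv.Perm U, (∀ P ∈ C, ⇑σ '' P = P) → σ ∈ G) ∧
      (∀ σ ∈ G, ∀ P ∈ C, ⇑σ '' P ∈ C) :=
  stmt_4_general G C hC
end

section
/- Let ε be a real number and n a positive integer with 0 ≤ ε < 1 and log₂ n ≥ 4/ε. Let 𝒫 be a partition of [n] = {1,…,n} with k parts, and let s := [Sym(n) : SStab_n(𝒫)] be the index of the setwise stabiliser of 𝒫 in Sym(n). If n ≤ s ≤ 2^(n^(1−ε)), then min{k, n−k} ≤ (8/ε)·(log₂ s)/(log₂ n). -/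
/-!
The stabiliser of a partition with `k` parts acts on the set of parts, and the kernel of that
action permutes each part separately, so its order is at most `k! ∏ |P|! ≤ k! (n - k + 1)!`.
Hence `choose n k ≤ (n - k + 1) s ≤ s²`, and for `m = min k (n - k)` the estimate
`n^m ≤ m^m · choose n m` gives `m log₂ (n / m) ≤ 2 log₂ s`. Since `n / m ≥ 2`, first
`m ≤ 2 log₂ s ≤ 2 n^(1-ε)`, so `log₂ (n / m) ≥ ε log₂ n - 1 ≥ (3/4) ε log₂ n`.
-/

open Pointwise

open Equiv MulAction Nat Real

theorem Nat.factorial_succ_mul_factorial_succ_le (a b : ℕ) :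
    (a + 1)! * (b + 1)! ≤ (a + b + 1)! := by
  induction b with
  | zero => simp
  | succ b ih =>
    calc (a + 1)! * (b + 1 + 1)! = (b + 2) * ((a + 1)! * (b + 1)!) := by
          rw [factorial_succ (b + 1)]; ring
      _ ≤ (a + b + 2) * (a + b + 1)! := Nat.mul_le_mul (by omega) ih
      _ = (a + b + 1 + 1)! := (factorial_succ _).symm

theorem Finset.prod_factorial_succ_le {ι : Type*} (t : Finset ι) (b : ι → ℕ) :
    ∏ i ∈ t, (b i + 1)! ≤ (∑ i ∈ t, b i + 1)! := by
  classical
  induction t using Finset.induction_on with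
  | empty => simp
  | insert j t hj ih =>
    rw [prod_insert hj, sum_insert hj]
    exact (Nat.mul_le_mul_left _ ih).trans (Nat.factorial_succ_mul_factorial_succ_le _ _)

namespace Setoid.IsPartition

variable {α : Type*} {C : Set (Set α)}

noncomputable def indexedPartition (hC : IsPartition C) :
    IndexedPartition (fun P : C => (P : Set α)) :=
  .mk' _ (fun P Q hPQ => hC.pairwiseDisjoint P.2 Q.2 (Subtype.coe_ne_coe.mpr hPQ))
    (fun P => nonempty_of_mem_partition hC P.2)
    (fun x => let ⟨P, ⟨hP, hx⟩, _⟩ := hC.2 x; ⟨⟨P, hP⟩, hx⟩)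

theorem ncard_le_card [Finite α] (hC : IsPartition C) : C.ncard ≤ Nat.card α := by
  set p := hC.indexedPartition
  exact Nat.card_le_card_of_injective p.some fun P Q h =>
    p.eq_of_mem (p.some_mem P) (h ▸ p.some_mem Q)

theorem card_ker_toPermHom_stabilizer_le [Fintype α] [DecidableEq α] [Fintype C]
    [DecidableEq C] (hC : IsPartition C) :
    Nat.card (toPermHom (stabilizer (Perm α) C) C).ker ≤
      ∏ P : C, (Fintype.card {x // hC.indexedPartition.index x = P})! := by
  set p := hC.indexedPartition
  rw [← DomMulAct.stabilizer_card, ← Nat.card_eq_fintype_card]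
  refine Nat.card_le_card_of_injective (fun g => ⟨g.1.1, funext fun x => ?_⟩) ?_
  · have hg : g.1.1 • (p.index x : Set α) = p.index x :=
      congrArg Subtype.val (Perm.ext_iff.mp (MonoidHom.mem_ker.mp g.2) (p.index x))
    exact p.mem_iff_index_eq.mp (hg ▸ Set.smul_mem_smul_set (p.mem_index x))
  · intro g h hgh
    simp only [Subtype.mk.injEq] at hgh
    exact Subtype.ext (Subtype.ext hgh)

theorem card_stabilizer_le_factorial_mul_prod_factorial [Fintype α] [DecidableEq α]
    [Fintype C] [DecidableEq C] (hC : IsPartition C) :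
    Nat.card (stabilizer (Perm α) C) ≤
      (Fintype.card C)! * ∏ P : C, (Fintype.card {x // hC.indexedPartition.index x = P})! := by
  set ρ := toPermHom (stabilizer (Perm α) C) C
  have hrange : Nat.card ρ.range ≤ (Fintype.card C)! := by
    rw [← Fintype.card_perm, ← Nat.card_eq_fintype_card]
    exact Nat.card_le_card_of_injective _ Subtype.val_injective
  rw [← ρ.ker.card_mul_index, Subgroup.index_ker, mul_comm]
  exact Nat.mul_le_mul hrange (card_ker_toPermHom_stabilizer_le hC)

theorem card_stabilizer_le_factorial_mul_factorial [Fintype α] [DecidableEq α]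
    (hC : IsPartition C) :
    Nat.card (stabilizer (Perm α) C) ≤ C.ncard ! * (Fintype.card α - C.ncard + 1)! := by
  classical
  have : Fintype C := Fintype.ofFinite C
  set p := hC.indexedPartition
  set fiber : C → ℕ := fun P => Fintype.card {x // p.index x = P}
  have hsum : ∑ P, fiber P = Fintype.card α :=
    Fintype.card_sigma.symm.trans (Fintype.card_congr (Equiv.sigmaFiberEquiv p.index))
  have hpos (P : C) : 1 ≤ fiber P := Fintype.card_pos_iff.mpr ⟨⟨p.some P, p.index_some P⟩⟩
  have hsub : ∑ P, (fiber P - 1) = Fintype.card α - Fintype.card C := by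
    rw [Finset.sum_tsub_distrib _ fun P _ => hpos P, hsum]
    simp
  have hprod : ∏ P, (fiber P)! ≤ (Fintype.card α - Fintype.card C + 1)! := by
    rw [← hsub, ← Finset.prod_congr rfl fun P _ =>
      congrArg factorial (Nat.sub_add_cancel (hpos P))]
    exact Finset.prod_factorial_succ_le _ _
  rw [Set.ncard_eq_toFinset_card', Set.toFinset_card]
  exact (card_stabilizer_le_factorial_mul_prod_factorial hC).trans (Nat.mul_le_mul_left _ hprod)

theorem choose_ncard_le_mul_index [Fintype α] [DecidableEq α] (hC : IsPartition C) :
    (Fintype.card α).choose C.ncard ≤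
      (Fintype.card α - C.ncard + 1) * (stabilizer (Perm α) C).index := by
  set n := Fintype.card α
  set k := C.ncard
  have hkn : k ≤ n := hC.ncard_le_card.trans_eq Nat.card_eq_fintype_card
  refine Nat.le_of_mul_le_mul_right (c := k ! * (n - k)!) ?_ (by positivity)
  calc n.choose k * (k ! * (n - k)!) = n ! := by
        rw [← mul_assoc, choose_mul_factorial_mul_factorial hkn]
    _ = (stabilizer (Perm α) C).index * Nat.card (stabilizer (Perm α) C) := by
      rw [mul_comm, Subgroup.card_mul_index, Nat.card_perm, Nat.card_eq_fintype_card]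
    _ ≤ (stabilizer (Perm α) C).index * (k ! * (n - k + 1)!) :=
      Nat.mul_le_mul_left _ (hC.card_stabilizer_le_factorial_mul_factorial)
    _ = (n - k + 1) * (stabilizer (Perm α) C).index * (k ! * (n - k)!) := by
      rw [factorial_succ]; ring

end Setoid.IsPartition

theorem Nat.pow_le_pow_mul_choose {n m : ℕ} (hmn : m ≤ n) : n ^ m ≤ m ^ m * n.choose m := by
  refine Nat.le_of_mul_le_mul_right (c := m !) ?_ (factorial_pos m)
  calc n ^ m * m ! = ∏ i ∈ Finset.range m, n * (m - i) := by
        rw [← descFactorial_self, descFactorial_eq_prod_range, Finset.prod_mul_distrib,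
          Finset.prod_const, Finset.card_range]
    _ ≤ ∏ i ∈ Finset.range m, m * (n - i) := by
        refine Finset.prod_le_prod' fun i _ => ?_
        rw [Nat.mul_sub, Nat.mul_sub, mul_comm n m]
        exact Nat.sub_le_sub_left (Nat.mul_le_mul_right i hmn) _
    _ = m ^ m * n.choose m * m ! := by
        rw [Finset.prod_mul_distrib, Finset.prod_const, Finset.card_range,
          ← descFactorial_eq_prod_range, descFactorial_eq_factorial_mul_choose]; ring

theorem Nat.two_pow_le_of_pow_le_pow_mul {n m t : ℕ} (hmn : 2 * m ≤ n)
    (h : n ^ m ≤ m ^ m * t) : 2 ^ m ≤ t := by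
  rcases m.eq_zero_or_pos with rfl | hm
  · simpa using h
  refine Nat.le_of_mul_le_mul_right (c := m ^ m) ?_ (by positivity)
  calc 2 ^ m * m ^ m = (2 * m) ^ m := (mul_pow _ _ _).symm
    _ ≤ n ^ m := Nat.pow_le_pow_left hmn m
    _ ≤ t * m ^ m := h.trans_eq (mul_comm _ _)

theorem Real.logb_natCast_nonneg {b : ℝ} (hb : 1 ≤ b) (n : ℕ) : 0 ≤ logb b n :=
  div_nonneg (log_natCast_nonneg n) (log_nonneg hb)

theorem cast_le_div_mul_logb_div_logb_of_pow_le {n m s : ℕ} {ε : ℝ}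
    (hlog : 4 ≤ ε * logb 2 n) (hm : 0 < m) (hmn : 2 * m ≤ n) (hpow : n ^ m ≤ m ^ m * (s * s))
    (hsub : (s : ℝ) ≤ 2 ^ ((n : ℝ) ^ (1 - ε))) :
    (m : ℝ) ≤ 8 / ε * (logb 2 s / logb 2 n) := by
  set L := logb 2 n
  set S := logb 2 s
  have hs : 0 < s := Nat.pos_of_ne_zero fun hs => by
    rw [hs, mul_zero, mul_zero, Nat.le_zero, pow_eq_zero_iff hm.ne'] at hpow; omega
  have hn : (0 : ℝ) < n := by exact_mod_cast (by omega : 0 < n)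
  have hm' : (0 : ℝ) < m := by exact_mod_cast hm
  have hL : 0 < L := logb_pos one_lt_two (by exact_mod_cast (by omega : 1 < n))
  have hε : 0 < ε := pos_of_mul_pos_left (by linarith) hL.le
  have hS : 0 ≤ S := logb_natCast_nonneg one_le_two s
  have hs' : (s : ℝ) ≠ 0 := by positivity
  have hmS : (m : ℝ) ≤ 2 * S := by
    have h2 : (2 : ℝ) ^ m ≤ s * s := by exact_mod_cast Nat.two_pow_le_of_pow_le_pow_mul hmn hpow
    have := logb_le_logb_of_le one_lt_two (by positivity) h2
    rwa [logb_pow, logb_self_eq_one one_lt_two, mul_one, logb_mul hs' hs', ← two_mul] at this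
  have hmL : (m : ℝ) * L ≤ m * logb 2 m + 2 * S := by
    have hpow' : (n : ℝ) ^ m ≤ m ^ m * (s * s) := by exact_mod_cast hpow
    have := logb_le_logb_of_le one_lt_two (by positivity) hpow'
    rwa [logb_pow, logb_mul (by positivity) (by positivity), logb_pow, logb_mul hs' hs',
      ← two_mul] at this
  have hSn : S ≤ (n : ℝ) ^ (1 - ε) := by
    have := logb_le_logb_of_le one_lt_two (by positivity) hsub
    rwa [logb_rpow two_pos (by norm_num)] at this
  have hlogm : logb 2 m ≤ 1 + (1 - ε) * L := by
    have := logb_le_logb_of_le one_lt_two hm'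
      (hmS.trans (mul_le_mul_of_nonneg_left hSn zero_le_two))
    rwa [logb_mul two_ne_zero (by positivity), logb_self_eq_one one_lt_two,
      logb_rpow_eq_mul_logb_of_pos hn] at this
  have hkey : (m : ℝ) * (ε * L - 1) ≤ 2 * S := by
    nlinarith [mul_le_mul_of_nonneg_left hlogm hm'.le]
  rw [show 8 / ε * (S / L) = 8 * S / (ε * L) by field_simp, le_div_iff₀ (by positivity)]
  nlinarith

theorem stmt_5_general (n : ℕ) (ε : ℝ)
    (hlog : 4 ≤ ε * Real.logb 2 n)
    (C : Set (Set (Fin n))) (hC : Setoid.IsPartition C) (k : ℕ) (hk : C.ncard = k)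
    (s : ℕ) (hs : s = (MulAction.stabilizer (Equiv.Perm (Fin n)) C).index)
    (hns : n ≤ s) (hsub : (s : ℝ) ≤ (2 : ℝ) ^ ((n : ℝ) ^ (1 - ε))) :
    (min k (n - k) : ℝ) ≤ 8 / ε * (Real.logb 2 s / Real.logb 2 n) := by
  have hkn : k ≤ n := by simpa [hk] using hC.ncard_le_card
  have hchoose : n.choose k ≤ (n - k + 1) * s := by
    simpa [hk, hs] using hC.choose_ncard_le_mul_index
  rw [← Nat.cast_sub hkn, ← Nat.cast_min]
  set m := min k (n - k) with hm_def
  obtain hm | hm := m.eq_zero_or_pos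
  · have hε : 0 < ε := pos_of_mul_pos_left (by linarith) (logb_natCast_nonneg one_le_two n)
    rw [hm, Nat.cast_zero]
    exact mul_nonneg (by positivity)
      (div_nonneg (logb_natCast_nonneg one_le_two s) (logb_natCast_nonneg one_le_two n))
  have hchoose_m : n.choose m ≤ s * s :=
    calc n.choose m = n.choose k := by
          rcases min_choice k (n - k) with h | h <;> simp [hm_def, h, Nat.choose_symm hkn]
      _ ≤ (n - k + 1) * s := hchoose
      _ ≤ s * s := Nat.mul_le_mul_right s (by omega)
  exact cast_le_div_mul_logb_div_logb_of_pow_le hlog hm (by omega)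
    ((Nat.pow_le_pow_mul_choose (by omega)).trans (Nat.mul_le_mul_left _ hchoose_m)) hsub

/-- Lemma 6 (small number of parts): let `0 ≤ ε < 1` with `log₂ n ≥ 4/ε`
(written multiplicatively as `4 ≤ ε · log₂ n`), let `C` be a partition of `[n]`
with `k` parts and let `s` be the index of the setwise stabiliser of `C` in
`Sym(n)`.  If `n ≤ s ≤ 2^(n^(1-ε))`, then
`min{k, n-k} ≤ (8/ε) · (log₂ s)/(log₂ n)`. -/
theorem stmt_5 (n : ℕ) (hn : 0 < n) (ε : ℝ) (hε0 : 0 ≤ ε) (hε1 : ε < 1)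
    (hlog : 4 ≤ ε * Real.logb 2 n)
    (C : Set (Set (Fin n))) (hC : Setoid.IsPartition C) (k : ℕ) (hk : C.ncard = k)
    (s : ℕ) (hs : s = (MulAction.stabilizer (Equiv.Perm (Fin n)) C).index)
    (hns : n ≤ s) (hsub : (s : ℝ) ≤ (2 : ℝ) ^ ((n : ℝ) ^ (1 - ε))) :
    (min k (n - k) : ℝ) ≤ 8 / ε * (Real.logb 2 s / Real.logb 2 n) :=
  stmt_5_general n ε hlog C hC k hk s hs hns hsub
end

section
/- Let ε be a real number and n a positive integer with 0 ≤ ε < 1 and log₂ n ≥ 8/ε². Let 𝒫 be a partition of [n] = {1,…,n} with at most n/2 parts, and let s := [Sym(n) : SStab_n(𝒫)] be the index of the setwise stabiliser of 𝒫 in Sym(n). If n ≤ s ≤ 2^(n^(1−ε)), then 𝒫 contains a part P with |P| ≥ n − (33/ε)·(log₂ s)/(log₂ n). -/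
/-!
The index `s` is the size of the orbit of `C` under `Sym(n)`, which we bound below by double
counting: every `u`-subset of `[n]` is a permuted copy of a fixed `u`-set `U` built from `C`, hence
is realised by some partition of the orbit, while each partition realises few `u`-sets.

If the largest part `P` has more than `n/2` elements, it is the only part of its size, so
`s ≥ C(n, t) ≥ (n/t)^t` with `t = n - |P| ≤ n/2`. Then `t ≤ log s ≤ n^(1-ε)`, hence
`log (n/t) ≥ ε log n` and `t ≤ log s / (ε log n)`.

Otherwise some union of parts has between `n/4` and `3n/4` elements, and a partition with at most
`n/2` parts has at most `2^(n/2)` unions of parts, so `s ≥ C(n, u) / 2^(n/2) ≥ 2^(3n/80)`. This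
contradicts `log s ≤ n^(1-ε) ≤ n/256`.
-/

open Pointwise Equiv MulAction Real

theorem Set.Finite.exists_subset_le_ncard_sUnion_lt {α : Type*} {S : Set (Set α)}
    (hS : S.Finite) {a θ : ℕ} (hθ : 0 < θ) (ha : ∀ P ∈ S, P.ncard ≤ a)
    (h : θ ≤ (⋃₀ S).ncard) : ∃ F ⊆ S, θ ≤ (⋃₀ F).ncard ∧ (⋃₀ F).ncard < θ + a := by
  induction S, hS using Set.Finite.induction_on with
  | empty => rw [Set.sUnion_empty, Set.ncard_empty] at h; omega
  | @insert P S _ _ ih =>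
    by_cases hS : θ ≤ (⋃₀ S).ncard
    · obtain ⟨F, hFS, hF⟩ := ih (fun Q hQ => ha Q (Set.mem_insert_of_mem P hQ)) hS
      exact ⟨F, hFS.trans (Set.subset_insert P S), hF⟩
    · refine ⟨insert P S, subset_rfl, h, ?_⟩
      have := Set.ncard_union_le P (⋃₀ S)
      have := ha P (Set.mem_insert P S)
      rw [Set.sUnion_insert]
      omega

namespace Nat

theorem choose_succ_le_three_mul_choose {n k : ℕ} (h : n ≤ 4 * k + 3) :
    n.choose (k + 1) ≤ 3 * n.choose k := by
  refine Nat.le_of_mul_le_mul_right ?_ k.succ_pos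
  calc n.choose (k + 1) * (k + 1) = n.choose k * (n - k) := choose_succ_right_eq n k
    _ ≤ n.choose k * (3 * (k + 1)) := Nat.mul_le_mul_left _ (by omega)
    _ = 3 * n.choose k * (k + 1) := by ring

theorem choose_add_le_three_pow_mul_choose {n k : ℕ} (h : n ≤ 4 * k + 3) (j : ℕ) :
    n.choose (k + j) ≤ 3 ^ j * n.choose k := by
  induction j with
  | zero => simp
  | succ j ih =>
    calc n.choose (k + j + 1) ≤ 3 * n.choose (k + j) :=
          choose_succ_le_three_mul_choose (by omega)
      _ ≤ 3 ^ (j + 1) * n.choose k := by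
          rw [pow_succ', mul_assoc]
          exact Nat.mul_le_mul_left 3 ih

theorem two_pow_le_succ_mul_choose_half (n : ℕ) : 2 ^ n ≤ (n + 1) * n.choose (n / 2) := by
  calc 2 ^ n = ∑ k ∈ Finset.range (n + 1), n.choose k := (sum_range_choose n).symm
    _ ≤ ∑ _k ∈ Finset.range (n + 1), n.choose (n / 2) :=
        Finset.sum_le_sum fun k _ => choose_le_middle k n
    _ = (n + 1) * n.choose (n / 2) := by simp

theorem two_pow_le_succ_mul_three_pow_mul_choose {n u : ℕ} (h₁ : n ≤ 4 * u)
    (h₂ : 4 * u ≤ 3 * n) : 2 ^ n ≤ (n + 1) * 3 ^ (n / 4) * n.choose u := by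
  obtain ⟨m, hm, hm₁, hm₂⟩ : ∃ m, n.choose u = n.choose m ∧ n ≤ 4 * m ∧ 2 * m ≤ n := by
    rcases le_total (2 * u) n with h | h
    · exact ⟨u, rfl, h₁, h⟩
    · exact ⟨n - u, (choose_symm (by omega)).symm, by omega, by omega⟩
  have hhalf : n.choose (n / 2) ≤ 3 ^ (n / 4) * n.choose m := by
    calc n.choose (n / 2) = n.choose (m + (n / 2 - m)) := by congr 1; omega
      _ ≤ 3 ^ (n / 2 - m) * n.choose m := choose_add_le_three_pow_mul_choose (by omega) _
      _ ≤ 3 ^ (n / 4) * n.choose m :=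
          Nat.mul_le_mul_right _ (Nat.pow_le_pow_right (by norm_num) (by omega))
  calc 2 ^ n ≤ (n + 1) * n.choose (n / 2) := two_pow_le_succ_mul_choose_half n
    _ ≤ (n + 1) * (3 ^ (n / 4) * n.choose m) := Nat.mul_le_mul_left _ hhalf
    _ = (n + 1) * 3 ^ (n / 4) * n.choose u := by rw [hm, mul_assoc]

theorem add_one_le_two_pow_div_sixteen {n : ℕ} (h : 256 ≤ n) : n + 1 ≤ 2 ^ (n / 16) := by
  have key : ∀ k, 16 ≤ k → 16 * k + 16 ≤ 2 ^ k := by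
    intro k hk
    induction k, hk using Nat.le_induction with
    | base => norm_num
    | succ k _ ih => rw [pow_succ]; omega
  have := key (n / 16) (by omega)
  omega

theorem div_pow_le_choose {n k : ℕ} (h : k ≤ n) : ((n : ℝ) / k) ^ k ≤ n.choose k := by
  induction k generalizing n with
  | zero => simp
  | succ k ih =>
    obtain ⟨n, rfl⟩ := Nat.exists_eq_add_one.2 (k.succ_pos.trans_le h)
    rcases Nat.eq_zero_or_pos k with rfl | hk
    · simp
    have hkn : (k : ℝ) ≤ n := by exact_mod_cast Nat.succ_le_succ_iff.1 h
    have hratio : ((n + 1 : ℕ) : ℝ) / (k + 1 : ℕ) ≤ n / k := by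
      rw [div_le_div_iff₀ (by positivity) (by positivity)]
      push_cast
      linarith
    have hchoose :
        ((n + 1).choose (k + 1) : ℝ) = ((n + 1 : ℕ) : ℝ) / (k + 1 : ℕ) * n.choose k := by
      rw [div_mul_eq_mul_div, eq_div_iff (by positivity)]
      exact_mod_cast (Nat.add_one_mul_choose_eq n k).symm
    calc (((n + 1 : ℕ) : ℝ) / (k + 1 : ℕ)) ^ (k + 1)
        = ((n + 1 : ℕ) : ℝ) / (k + 1 : ℕ) * (((n + 1 : ℕ) : ℝ) / (k + 1 : ℕ)) ^ k :=
          _root_.pow_succ' _ _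
      _ ≤ ((n + 1 : ℕ) : ℝ) / (k + 1 : ℕ) * ((n : ℝ) / k) ^ k := by gcongr
      _ ≤ ((n + 1 : ℕ) : ℝ) / (k + 1 : ℕ) * n.choose k := by gcongr; exact ih (by omega)
      _ = (n + 1).choose (k + 1) := hchoose.symm

end Nat

theorem MulAction.ncard_orbit_pos {G X : Type*} [Group G] [MulAction G X] [Finite X] (x : X) :
    0 < (orbit G x).ncard :=
  (Set.ncard_pos (Set.toFinite _)).2 (nonempty_orbit x)

section PermOrbit

variable {α : Type*}

theorem exists_perm_smul_set_eq [Finite α] {U V : Set α} (h : U.ncard = V.ncard) :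
    ∃ σ : Perm α, σ • U = V := by
  classical
  lift U to Finset α using U.toFinite
  lift V to Finset α using V.toFinite
  simp only [Set.ncard_coe_finset] at h
  have := Set.powersetCard.isPretransitive (α := α) (n := V.card)
  obtain ⟨σ, hσ⟩ := exists_smul_eq (Perm α)
    (⟨U, h⟩ : Set.powersetCard α V.card) ⟨V, rfl⟩
  exact ⟨σ, by rw [← Finset.coe_smul_finset]; exact congrArg _ (congrArg Subtype.val hσ)⟩

theorem Set.PairwiseDisjoint.smul_set {G : Type*} [Group G] [MulAction G α]
    {C : Set (Set α)} (hC : C.PairwiseDisjoint id) (g : G) : (g • C).PairwiseDisjoint id := by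
  rintro _ ⟨V, hV, rfl⟩ _ ⟨W, hW, rfl⟩ hne
  exact Set.disjoint_smul_set.2 (hC hV hW fun h => hne (h ▸ rfl))

theorem choose_ncard_le_mul_ncard_orbit [Finite α] (R : Set (Set α) → Set α → Prop)
    (hR : ∀ (σ : Perm α) D V, R D V → R (σ • D) (σ • V)) {C : Set (Set α)} {U : Set α}
    (hU : R C U) {M : ℕ}
    (hM : ∀ D ∈ orbit (Perm α) C, {V | V.ncard = U.ncard ∧ R D V}.ncard ≤ M) :
    (Nat.card α).choose U.ncard ≤ M * (orbit (Perm α) C).ncard := by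
  classical
  have hO : (orbit (Perm α) C).Finite := Set.toFinite _
  have hcover : {V ⊆ Set.univ | V.ncard = U.ncard} ⊆
      ⋃ D ∈ hO.toFinset, {V | V.ncard = U.ncard ∧ R D V} := by
    rintro V ⟨-, hV⟩
    obtain ⟨σ, rfl⟩ := exists_perm_smul_set_eq hV.symm
    exact Set.mem_biUnion (hO.mem_toFinset.2 (mem_orbit C σ)) ⟨hV, hR σ C U hU⟩
  calc (Nat.card α).choose U.ncard = {V ⊆ Set.univ | V.ncard = U.ncard}.ncard := by
        rw [Set.ncard_powerset_ncard Set.finite_univ, Set.ncard_univ]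
    _ ≤ (⋃ D ∈ hO.toFinset, {V | V.ncard = U.ncard ∧ R D V}).ncard :=
        Set.ncard_le_ncard hcover
    _ ≤ ∑ D ∈ hO.toFinset, {V | V.ncard = U.ncard ∧ R D V}.ncard :=
        Finset.set_ncard_biUnion_le _ _
    _ ≤ hO.toFinset.card • M :=
        Finset.sum_le_card_nsmul _ _ _ fun D hD => hM D (hO.mem_toFinset.1 hD)
    _ = M * (orbit (Perm α) C).ncard := by
        rw [Set.ncard_eq_toFinset_card _ hO, smul_eq_mul, mul_comm]

theorem ncard_setOf_ncard_eq_mem_le_one [Finite α] {D : Set (Set α)}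
    (hD : D.PairwiseDisjoint id) {a : ℕ} (ha : Nat.card α < 2 * a) :
    {V | V.ncard = a ∧ V ∈ D}.ncard ≤ 1 := by
  refine (Set.ncard_le_one).2 fun V ⟨hVa, hV⟩ W ⟨hWa, hW⟩ => ?_
  by_contra hne
  have := Set.ncard_union_eq (s := V) (t := W) (hD hV hW hne)
  have := Set.ncard_le_card (V ∪ W)
  omega

theorem choose_ncard_le_ncard_orbit [Finite α] {C : Set (Set α)} (hC : C.PairwiseDisjoint id)
    {P : Set α} (hP : P ∈ C) (h : Nat.card α < 2 * P.ncard) :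
    (Nat.card α).choose P.ncard ≤ (orbit (Perm α) C).ncard := by
  simpa using choose_ncard_le_mul_ncard_orbit (fun D V => V ∈ D) (M := 1)
    (fun σ D V => Set.smul_mem_smul_set) hP <| by
      rintro D ⟨σ, rfl⟩
      exact ncard_setOf_ncard_eq_mem_le_one (hC.smul_set σ) h

theorem choose_ncard_sUnion_le_two_pow_mul_ncard_orbit [Finite α] {C F : Set (Set α)}
    (hF : F ⊆ C) :
    (Nat.card α).choose (⋃₀ F).ncard ≤ 2 ^ C.ncard * (orbit (Perm α) C).ncard := by
  refine choose_ncard_le_mul_ncard_orbit (fun D V => ∃ F ⊆ D, ⋃₀ F = V) ?_ ⟨F, hF, rfl⟩ ?_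
  · rintro σ D _ ⟨F, hF, rfl⟩
    refine ⟨σ • F, Set.smul_set_mono hF, ?_⟩
    rw [Set.smul_set_sUnion, Set.sUnion_eq_biUnion]
    exact Set.biUnion_image
  · rintro D ⟨σ, rfl⟩
    calc _ ≤ (Set.sUnion '' 𝒫 (σ • C)).ncard :=
          Set.ncard_le_ncard <| by rintro V ⟨-, F, hF, rfl⟩; exact ⟨F, hF, rfl⟩
      _ ≤ (𝒫 (σ • C)).ncard := Set.ncard_image_le (Set.toFinite _)
      _ = 2 ^ C.ncard := by rw [Set.ncard_powerset, Set.ncard_smul_set]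

theorem Setoid.IsPartition.two_pow_le_mul_ncard_orbit [Finite α] {C : Set (Set α)}
    (hC : Setoid.IsPartition C) (hα : 0 < Nat.card α) (hparts : 2 * C.ncard ≤ Nat.card α)
    (hsmall : ∀ P ∈ C, 2 * P.ncard ≤ Nat.card α) :
    2 ^ Nat.card α ≤ (Nat.card α + 1) * 3 ^ (Nat.card α / 4) * 2 ^ (Nat.card α / 2) *
      (orbit (Perm α) C).ncard := by
  set n := Nat.card α
  obtain ⟨F, hFC, hF₁, hF₂⟩ := (Set.toFinite C).exists_subset_le_ncard_sUnion_lt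
    (a := n / 2) (θ := n / 4 + 1) (by omega) (fun P hP => by have := hsmall P hP; omega)
    (by rw [hC.sUnion_eq_univ, Set.ncard_univ]; omega)
  calc 2 ^ n ≤ (n + 1) * 3 ^ (n / 4) * n.choose (⋃₀ F).ncard :=
        Nat.two_pow_le_succ_mul_three_pow_mul_choose (by omega) (by omega)
    _ ≤ (n + 1) * 3 ^ (n / 4) * (2 ^ C.ncard * (orbit (Perm α) C).ncard) :=
        Nat.mul_le_mul_left _ (choose_ncard_sUnion_le_two_pow_mul_ncard_orbit hFC)
    _ ≤ (n + 1) * 3 ^ (n / 4) * (2 ^ (n / 2) * (orbit (Perm α) C).ncard) := by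
        gcongr
        · norm_num
        · omega
    _ = (n + 1) * 3 ^ (n / 4) * 2 ^ (n / 2) * (orbit (Perm α) C).ncard := by ring

end PermOrbit

theorem mul_mul_logb_le_of_mul_logb_div_le {n t ε ℓ : ℝ} (ht : 0 < t) (h2t : 2 * t ≤ n)
    (hlb : t * logb 2 (n / t) ≤ ℓ) (hℓ : ℓ ≤ n ^ (1 - ε)) : t * (ε * logb 2 n) ≤ ℓ := by
  have hn : 0 < n := by linarith
  have hlog_div : 1 ≤ logb 2 (n / t) := by
    rw [le_logb_iff_rpow_le one_lt_two (by positivity), rpow_one, le_div_iff₀ ht]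
    exact h2t
  have hlogt : logb 2 t ≤ (1 - ε) * logb 2 n :=
    calc logb 2 t ≤ logb 2 (n ^ (1 - ε)) := logb_le_logb_of_le one_lt_two ht (by nlinarith)
      _ = (1 - ε) * logb 2 n := logb_rpow_eq_mul_logb_of_pos hn
  have : ε * logb 2 n ≤ logb 2 (n / t) := by
    rw [logb_div hn.ne' ht.ne']
    linarith
  calc t * (ε * logb 2 n) ≤ t * logb 2 (n / t) := by gcongr
    _ ≤ ℓ := hlb

theorem sub_ncard_mul_le_logb_ncard_orbit {α : Type*} [Finite α] {C : Set (Set α)}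
    (hC : C.PairwiseDisjoint id) {P : Set α} (hP : P ∈ C) (h : Nat.card α < 2 * P.ncard) {ε : ℝ}
    (hO : logb 2 (orbit (Perm α) C).ncard ≤ (Nat.card α : ℝ) ^ (1 - ε)) :
    ((Nat.card α : ℝ) - P.ncard) * (ε * logb 2 (Nat.card α)) ≤
      logb 2 (orbit (Perm α) C).ncard := by
  set n := Nat.card α
  have hPn : P.ncard ≤ n := Set.ncard_le_card P
  have horbit : n.choose (n - P.ncard) ≤ (orbit (Perm α) C).ncard := by
    rw [Nat.choose_symm hPn]
    exact choose_ncard_le_ncard_orbit hC hP h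
  have ht : ((n - P.ncard : ℕ) : ℝ) = n - P.ncard := Nat.cast_sub hPn
  rw [← ht]
  rcases Nat.eq_zero_or_pos (n - P.ncard) with h0 | hpos
  · rw [h0, Nat.cast_zero, zero_mul]
    exact logb_nonneg one_lt_two (by exact_mod_cast ncard_orbit_pos C)
  have htR : (0 : ℝ) < (n - P.ncard : ℕ) := by exact_mod_cast hpos
  have hnR : (0 : ℝ) < n := by exact_mod_cast hpos.trans_le (Nat.sub_le n _)
  have h2t : 2 * ((n - P.ncard : ℕ) : ℝ) ≤ n := by
    have : (n : ℝ) < 2 * P.ncard := by exact_mod_cast h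
    rw [ht]
    linarith
  refine mul_mul_logb_le_of_mul_logb_div_le htR h2t ?_ hO
  rw [← logb_pow]
  exact logb_le_logb_of_le one_lt_two (pow_pos (div_pos hnR htR) _)
    ((Nat.div_pow_le_choose (Nat.sub_le n _)).trans (by exact_mod_cast horbit))

theorem three_mul_div_eighty_le_logb {n s : ℕ} (hn : 256 ≤ n)
    (h : 2 ^ n ≤ (n + 1) * 3 ^ (n / 4) * 2 ^ (n / 2) * s) : 3 * (n : ℝ) / 80 ≤ logb 2 s := by
  have hs : 0 < s := Nat.pos_of_ne_zero fun h0 => by simp [h0] at h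
  have hcast : (2 : ℝ) ^ n ≤ (n + 1) * 3 ^ (n / 4) * 2 ^ (n / 2) * s := by exact_mod_cast h
  have hlog := logb_le_logb_of_le one_lt_two (by positivity) hcast
  rw [logb_mul (by positivity) (by positivity), logb_mul (by positivity) (by positivity),
    logb_mul (by positivity) (by positivity), logb_pow, logb_pow, logb_pow,
    logb_self_eq_one one_lt_two] at hlog
  have hsucc : logb 2 (n + 1) ≤ n / 16 :=
    calc logb 2 (n + 1) ≤ logb 2 (2 ^ (n / 16)) := logb_le_logb_of_le one_lt_two (by positivity)
          (by exact_mod_cast Nat.add_one_le_two_pow_div_sixteen hn)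
      _ = (n / 16 : ℕ) := by rw [logb_pow, logb_self_eq_one one_lt_two, mul_one]
      _ ≤ n / 16 := Nat.cast_div_le
  have hthree : logb 2 3 ≤ 8 / 5 := by
    have : logb 2 ((3 : ℝ) ^ 5) ≤ logb 2 ((2 : ℝ) ^ 8) :=
      logb_le_logb_of_le one_lt_two (by norm_num) (by norm_num)
    rw [logb_pow, logb_pow, logb_self_eq_one one_lt_two] at this
    push_cast at this
    linarith
  have h4 : ((n / 4 : ℕ) : ℝ) ≤ n / 4 := Nat.cast_div_le
  have h2 : ((n / 2 : ℕ) : ℝ) ≤ n / 2 := Nat.cast_div_le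
  have h3 : 0 ≤ logb 2 3 := logb_nonneg one_lt_two (by norm_num)
  -- `1/16 + (1/4) (8/5) + 1/2 = 77/80`
  nlinarith

theorem rpow_one_sub_le_div {x ε : ℝ} (hx : 0 < x) (h : 8 ≤ ε * logb 2 x) :
    x ^ (1 - ε) ≤ x / 256 := by
  have : 256 ≤ x ^ ε := by
    have := (le_logb_iff_rpow_le one_lt_two (rpow_pos_of_pos hx ε)).1
      (h.trans_eq (logb_rpow_eq_mul_logb_of_pos hx).symm)
    norm_num at this
    exact this
  rw [rpow_sub hx, rpow_one]
  gcongr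

theorem stmt_6_general (n : ℕ) (ε : ℝ) (hε0 : 0 ≤ ε) (hε1 : ε < 1)
    (hlog : 8 ≤ ε ^ 2 * Real.logb 2 n)
    (C : Set (Set (Fin n))) (hC : Setoid.IsPartition C)
    (hparts : (C.ncard : ℝ) ≤ n / 2)
    (s : ℕ) (hs : s = (MulAction.stabilizer (Equiv.Perm (Fin n)) C).index)
    (hsub : (s : ℝ) ≤ (2 : ℝ) ^ ((n : ℝ) ^ (1 - ε))) :
    ∃ P ∈ C, (n : ℝ) - 33 / ε * (Real.logb 2 s / Real.logb 2 n) ≤ (P.ncard : ℝ) := by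
  have hε : 0 < ε := hε0.lt_of_ne (by rintro rfl; norm_num at hlog)
  have hεL : 8 ≤ ε * logb 2 n := by nlinarith
  have hn : 256 ≤ n := by
    have hn0 : 0 < n := Nat.pos_of_ne_zero (by rintro rfl; norm_num at hεL)
    have := (le_logb_iff_rpow_le one_lt_two (by exact_mod_cast hn0)).1
      (by nlinarith : 8 ≤ logb 2 n)
    norm_num at this
    exact_mod_cast this
  have hcard : Nat.card (Fin n) = n := Nat.card_fin n
  rw [hs, index_stabilizer] at hsub ⊢
  have hs_pos : (1 : ℝ) ≤ (orbit (Perm (Fin n)) C).ncard := by exact_mod_cast ncard_orbit_pos C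
  have hℓ : logb 2 (orbit (Perm (Fin n)) C).ncard ≤ (n : ℝ) ^ (1 - ε) :=
    (logb_le_iff_le_rpow one_lt_two (by positivity)).2 hsub
  obtain ⟨P, hP, hmax⟩ := C.exists_max_image Set.ncard (Set.toFinite C)
    (let ⟨P, hP, _⟩ := hC.2 ⟨0, by omega⟩; ⟨P, hP.1⟩)
  refine ⟨P, hP, ?_⟩
  by_cases hbig : n < 2 * P.ncard
  · have := sub_ncard_mul_le_logb_ncard_orbit hC.pairwiseDisjoint hP (by rwa [hcard])
      (by rwa [hcard])
    rw [hcard] at this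
    have hℓ0 := logb_nonneg one_lt_two hs_pos
    rw [div_mul_div_comm, sub_le_comm, le_div_iff₀ (by positivity)]
    linarith
  · have hparts' : 2 * C.ncard ≤ n := by exact_mod_cast (by linarith : (2 * C.ncard : ℝ) ≤ n)
    have h2 := hC.two_pow_le_mul_ncard_orbit (by rw [hcard]; omega) (by rwa [hcard])
      (fun Q hQ => by rw [hcard]; have := hmax Q hQ; omega)
    rw [hcard] at h2
    have := three_mul_div_eighty_le_logb hn h2
    have := rpow_one_sub_le_div (by positivity) hεL
    have : (256 : ℝ) ≤ n := by exact_mod_cast hn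
    linarith

/-- Lemma 7 (large part): let `0 ≤ ε < 1` with `log₂ n ≥ 8/ε²` (written
multiplicatively as `8 ≤ ε² · log₂ n`), let `C` be a partition of `[n]` with at
most `n/2` parts and let `s` be the index of the setwise stabiliser of `C` in
`Sym(n)`.  If `n ≤ s ≤ 2^(n^(1-ε))`, then `C` contains a part with at least
`n - (33/ε) · (log₂ s)/(log₂ n)` elements. -/
theorem stmt_6 (n : ℕ) (hn : 0 < n) (ε : ℝ) (hε0 : 0 ≤ ε) (hε1 : ε < 1)
    (hlog : 8 ≤ ε ^ 2 * Real.logb 2 n)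
    (C : Set (Set (Fin n))) (hC : Setoid.IsPartition C)
    (hparts : (C.ncard : ℝ) ≤ n / 2)
    (s : ℕ) (hs : s = (MulAction.stabilizer (Equiv.Perm (Fin n)) C).index)
    (hns : n ≤ s) (hsub : (s : ℝ) ≤ (2 : ℝ) ^ ((n : ℝ) ^ (1 - ε))) :
    ∃ P ∈ C, (n : ℝ) - 33 / ε * (Real.logb 2 s / Real.logb 2 n) ≤ (P.ncard : ℝ) :=
  stmt_6_general n ε hε0 hε1 hlog C hC hparts s hs hsub
end

section
/- Let a group G act on a set X, let H be a finite subset of X, and let S be a finite set of pairs (h,σ) with h ∈ H and σ ∈ G that is useful and independent. Then the orbit of H under the induced action of G on subsets of X has at least 2^|S| elements: |{σ·H : σ ∈ G}| ≥ 2^|S|. -/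
open Pointwise

/-!
Label each `T ⊆ S` by the product `σ_T` of the group elements of its pairs. By independence,
`σ_T` sends `h` to `σ • h` for `(h, σ) ∈ T` and fixes `σ • h` for `(h, σ) ∉ T`; by usefulness
`σ • h ∉ H`, so `σ • h ∈ σ_T • H` exactly when `(h, σ) ∈ T`. Hence `T ↦ σ_T • H` is injective on
the `2 ^ |S|` subsets of `S`.
-/

theorem List.prod_smul_eq_of_forall_smul_eq {M X : Type*} [Monoid M] [MulAction M X]
    {l : List M} {x : X} (h : ∀ g ∈ l, g • x = x) : l.prod • x = x :=
  list_prod_mem (S := MulAction.stabilizerSubmonoid M x) h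

namespace MulAction

variable {G X : Type*} [Group G] [MulAction G X]

def IsIndependentPairs (S : Set (X × G)) : Prop :=
  ∀ p ∈ S, ∀ q ∈ S, p ≠ q → q.2 • p.1 = p.1 ∧ q.2 • p.2 • p.1 = p.2 • p.1

namespace IsIndependentPairs

variable {S : Set (X × G)} (hS : IsIndependentPairs S)
include hS

theorem prod_smul_fst_of_not_mem {L : List (X × G)} (hL : ∀ q ∈ L, q ∈ S)
    {p : X × G} (hpS : p ∈ S) (hpL : p ∉ L) : (L.map Prod.snd).prod • p.1 = p.1 := by
  refine List.prod_smul_eq_of_forall_smul_eq ?_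
  simp only [List.mem_map]
  rintro _ ⟨q, hqL, rfl⟩
  exact (hS p hpS q (hL q hqL) (ne_of_mem_of_not_mem hqL hpL).symm).1

theorem prod_smul_smul_of_not_mem {L : List (X × G)} (hL : ∀ q ∈ L, q ∈ S)
    {p : X × G} (hpS : p ∈ S) (hpL : p ∉ L) :
    (L.map Prod.snd).prod • p.2 • p.1 = p.2 • p.1 := by
  refine List.prod_smul_eq_of_forall_smul_eq ?_
  simp only [List.mem_map]
  rintro _ ⟨q, hqL, rfl⟩
  exact (hS p hpS q (hL q hqL) (ne_of_mem_of_not_mem hqL hpL).symm).2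

theorem prod_smul_fst_of_mem {L : List (X × G)} (hnd : L.Nodup) (hL : ∀ q ∈ L, q ∈ S)
    {p : X × G} (hpL : p ∈ L) : (L.map Prod.snd).prod • p.1 = p.2 • p.1 := by
  induction L with
  | nil => cases hpL
  | cons q L ih =>
    obtain ⟨hqL, hnd⟩ := List.nodup_cons.mp hnd
    have hLS : ∀ r ∈ L, r ∈ S := fun r hr => hL r (List.mem_cons_of_mem q hr)
    simp only [List.map_cons, List.prod_cons, mul_smul]
    rcases List.mem_cons.mp hpL with rfl | hpL
    · rw [hS.prod_smul_fst_of_not_mem hLS (hL p List.mem_cons_self) hqL]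
    · rw [ih hnd hLS hpL,
        (hS p (hLS p hpL) q (hL q List.mem_cons_self) (ne_of_mem_of_not_mem hpL hqL)).2]

end IsIndependentPairs

noncomputable def pairsProd (T : Finset (X × G)) : G :=
  (T.toList.map Prod.snd).prod

theorem smul_mem_pairsProd_smul_iff {H : Set X} {S T : Finset (X × G)}
    (hS : IsIndependentPairs (S : Set (X × G))) (hSH : ∀ p ∈ S, p.1 ∈ H)
    (huseful : ∀ p ∈ S, p.2 • p.1 ∉ H) (hTS : T ⊆ S) {p : X × G} (hpS : p ∈ S) :
    p.2 • p.1 ∈ pairsProd T • H ↔ p ∈ T := by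
  have hT : ∀ q ∈ T.toList, q ∈ (S : Set (X × G)) :=
    fun q hq => hTS (Finset.mem_toList.mp hq)
  constructor
  · intro hmem
    by_contra hpT
    rw [Set.mem_smul_set_iff_inv_smul_mem, pairsProd, inv_smul_eq_iff.mpr
      (hS.prod_smul_smul_of_not_mem hT hpS (by simpa using hpT)).symm] at hmem
    exact huseful p hpS hmem
  · intro hpT
    rw [pairsProd, ← hS.prod_smul_fst_of_mem T.nodup_toList hT (Finset.mem_toList.mpr hpT)]
    exact Set.smul_mem_smul_set (hSH p hpS)

theorem pairsProd_smul_injOn {H : Set X} {S : Finset (X × G)}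
    (hS : IsIndependentPairs (S : Set (X × G))) (hSH : ∀ p ∈ S, p.1 ∈ H)
    (huseful : ∀ p ∈ S, p.2 • p.1 ∉ H) :
    Set.InjOn (fun T => pairsProd T • H) (S.powerset : Set (Finset (X × G))) := by
  intro T hT T' hT' hTT'
  rw [Finset.coe_powerset, Set.mem_preimage, Set.mem_powerset_iff, Finset.coe_subset] at hT hT'
  ext p
  by_cases hpS : p ∈ S
  · rw [← smul_mem_pairsProd_smul_iff hS hSH huseful hT hpS,
      ← smul_mem_pairsProd_smul_iff hS hSH huseful hT' hpS]
    exact Iff.of_eq (congrArg (p.2 • p.1 ∈ ·) hTT')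
  · exact iff_of_false (fun h => hpS (hT h)) (fun h => hpS (hT' h))

end MulAction

theorem stmt_7_general {G : Type*} [Group G] {X : Type*} [MulAction G X]
    (H : Set X) (S : Finset (X × G))
    (hSH : ∀ p ∈ S, p.1 ∈ H)
    (huseful : ∀ p ∈ S, p.2 • p.1 ∉ H)
    (hindep : ∀ p ∈ S, ∀ q ∈ S, p ≠ q →
      q.2 • p.1 = p.1 ∧ q.2 • p.2 • p.1 = p.2 • p.1) :
    (2 : ℕ∞) ^ S.card ≤ (MulAction.orbit G H).encard := by
  calc (2 : ℕ∞) ^ S.card = (S.powerset : Set (Finset (X × G))).encard := by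
        rw [Set.encard_coe_eq_coe_finsetCard, Finset.card_powerset]
        norm_cast
    _ ≤ (MulAction.orbit G H).encard :=
        Set.encard_le_encard_of_injOn (fun T _ => ⟨MulAction.pairsProd T, rfl⟩)
          (MulAction.pairsProd_smul_injOn hindep hSH huseful)

/-- Claim 10: if a group `G` acts on `X`, `H ⊆ X` is finite, and `S` is a
finite set of pairs `(h, σ) ∈ H × G` that is useful (`σ • h ∉ H`) and
independent (for distinct pairs, `σ' • h = h` and `σ' • (σ • h) = σ • h`),
then the orbit of `H` under the induced action of `G` on subsets of `X`
has at least `2^|S|` elements. -/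
theorem stmt_7 {G : Type*} [Group G] {X : Type*} [MulAction G X]
    (H : Set X) (hH : H.Finite) (S : Finset (X × G))
    (hSH : ∀ p ∈ S, p.1 ∈ H)
    (huseful : ∀ p ∈ S, p.2 • p.1 ∉ H)
    (hindep : ∀ p ∈ S, ∀ q ∈ S, p ≠ q →
      q.2 • p.1 = p.1 ∧ q.2 • p.2 • p.1 = p.2 • p.1) :
    (2 : ℕ∞) ^ S.card ≤ (MulAction.orbit G H).encard :=
  stmt_7_general H S hSH huseful hindep
end
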